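/- Let H(v,w) be the (2N)×(2N) tridiagonal matrix with zero diagonal and alternating off-diagonal entries v, w, ..., v (starting and ending with v). If |v| > |w| > 0, then H(v,w) is invertible and its smallest singular value is bounded below by |v| − |w| > 0, uniformly in N. -/

import Mathlib

/-!
Split the chain into the intracell bonds `{2k, 2k+1}` and the intercell bonds `{2k-1, 2k}`.
Then `H(v,w) = v • S + w • T`, where `S` permutes the coordinates (it swaps the two sites of
each cell) and `T` permutes them up to zeroing the two boundary sites. Hence `‖S x‖ = ‖x‖` and
`‖T x‖ ≤ ‖x‖`, so `‖H x‖ ≥ (|v| - |w|) ‖x‖`; a positive lower bound makes `H` injective, hence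
invertible.
-/

def sshMatrix (N : ℕ) (v w : ℝ) : Matrix (Fin (2 * N)) (Fin (2 * N)) ℝ :=
  Matrix.of fun i j =>
    if (i : ℕ) + 1 = (j : ℕ) ∨ (j : ℕ) + 1 = (i : ℕ) then
      (if (min (i : ℕ) (j : ℕ)) % 2 = 0 then v else w)
    else 0

open Matrix WithLp

namespace EuclideanSpace

variable {𝕜 ι : Type*} [RCLike 𝕜] [Fintype ι]

theorem norm_toLp_comp_perm (x : EuclideanSpace 𝕜 ι) (σ : Equiv.Perm ι) :
    ‖toLp 2 (x ∘ σ)‖ = ‖x‖ := by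
  simp only [EuclideanSpace.norm_eq, Function.comp_apply]
  rw [Equiv.sum_comp σ fun i => ‖x i‖ ^ 2]

theorem norm_le_of_forall_norm_le {x y : EuclideanSpace 𝕜 ι} (h : ∀ i, ‖x i‖ ≤ ‖y i‖) :
    ‖x‖ ≤ ‖y‖ := by
  simp only [EuclideanSpace.norm_eq]
  gcongr with i
  exact h i

end EuclideanSpace

theorem Matrix.isUnit_of_mul_norm_le_norm_toEuclideanLin {𝕜 n : Type*} [RCLike 𝕜] [Fintype n]
    [DecidableEq n] {A : Matrix n n 𝕜} {c : ℝ} (hc : 0 < c)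
    (h : ∀ x, c * ‖x‖ ≤ ‖toEuclideanLin A x‖) : IsUnit A := by
  rw [← mulVec_injective_iff_isUnit]
  intro x y hxy
  have hker : toEuclideanLin A (toLp 2 (x - y)) = 0 := by
    simp [toLpLin_toLp, hxy]
  have hbound := h (toLp 2 (x - y))
  rw [hker, norm_zero] at hbound
  have hzero : toLp 2 (x - y) = 0 := norm_le_zero_iff.1 (nonpos_of_mul_nonpos_right hbound hc)
  simpa [sub_eq_zero] using hzero

section SSH

variable (N : ℕ)

def intraCellPartner (i : Fin (2 * N)) : Fin (2 * N) :=
  if h : (i : ℕ) % 2 = 0 then ⟨i + 1, by omega⟩ else ⟨i - 1, by omega⟩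

def HasInterCellPartner (i : Fin (2 * N)) : Prop :=
  (i : ℕ) % 2 = 0 ∧ 0 < (i : ℕ) ∨ (i : ℕ) % 2 = 1 ∧ (i : ℕ) + 1 < 2 * N

instance (i : Fin (2 * N)) : Decidable (HasInterCellPartner N i) := by
  unfold HasInterCellPartner; infer_instance

/-- The boundary sites `0` and `2N - 1`, which have no intercell bond, are fixed, so that this
is an involution of the whole chain. -/
def interCellPartner (i : Fin (2 * N)) : Fin (2 * N) :=
  if (i : ℕ) % 2 = 0 ∧ 0 < (i : ℕ) then ⟨i - 1, by omega⟩
  else if h : (i : ℕ) % 2 = 1 ∧ (i : ℕ) + 1 < 2 * N then ⟨i + 1, h.2⟩ else i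

theorem val_intraCellPartner (i : Fin (2 * N)) :
    (intraCellPartner N i : ℕ) = if (i : ℕ) % 2 = 0 then (i : ℕ) + 1 else (i : ℕ) - 1 := by
  unfold intraCellPartner; split_ifs <;> rfl

theorem val_interCellPartner (i : Fin (2 * N)) :
    (interCellPartner N i : ℕ) =
      if (i : ℕ) % 2 = 0 ∧ 0 < (i : ℕ) then (i : ℕ) - 1
      else if (i : ℕ) % 2 = 1 ∧ (i : ℕ) + 1 < 2 * N then (i : ℕ) + 1 else (i : ℕ) := by
  unfold interCellPartner; split_ifs <;> rfl

theorem intraCellPartner_involutive : Function.Involutive (intraCellPartner N) := by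
  intro i
  ext
  simp only [val_intraCellPartner]
  split_ifs <;> omega

theorem interCellPartner_involutive : Function.Involutive (interCellPartner N) := by
  intro i
  ext
  simp only [val_interCellPartner]
  split_ifs <;> omega

variable {N}

theorem sshMatrix_apply (v w : ℝ) (i j : Fin (2 * N)) :
    sshMatrix N v w i j = (if j = intraCellPartner N i then v else 0) +
      if HasInterCellPartner N i ∧ j = interCellPartner N i then w else 0 := by
  simp only [sshMatrix, of_apply, HasInterCellPartner, Fin.ext_iff, val_intraCellPartner,
    val_interCellPartner]
  split_ifs <;> first | omega | simp

theorem sshMatrix_mulVec (v w : ℝ) (x : Fin (2 * N) → ℝ) (i : Fin (2 * N)) :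
    (sshMatrix N v w *ᵥ x) i = v * x (intraCellPartner N i) +
      if HasInterCellPartner N i then w * x (interCellPartner N i) else 0 := by
  simp [mulVec, dotProduct, sshMatrix_apply, add_mul, Finset.sum_add_distrib, ite_and]

def intraCellHop (x : EuclideanSpace ℝ (Fin (2 * N))) : EuclideanSpace ℝ (Fin (2 * N)) :=
  toLp 2 (x ∘ intraCellPartner N)

def interCellHop (x : EuclideanSpace ℝ (Fin (2 * N))) : EuclideanSpace ℝ (Fin (2 * N)) :=
  toLp 2 fun i => if HasInterCellPartner N i then x (interCellPartner N i) else 0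

theorem norm_intraCellHop (x : EuclideanSpace ℝ (Fin (2 * N))) : ‖intraCellHop x‖ = ‖x‖ :=
  EuclideanSpace.norm_toLp_comp_perm x (intraCellPartner_involutive N).toPerm

theorem norm_interCellHop_le (x : EuclideanSpace ℝ (Fin (2 * N))) : ‖interCellHop x‖ ≤ ‖x‖ :=
  calc ‖interCellHop x‖ ≤ ‖toLp 2 (x ∘ interCellPartner N)‖ :=
        EuclideanSpace.norm_le_of_forall_norm_le fun i => by
          simp only [interCellHop, PiLp.toLp_apply, Function.comp_apply]
          split_ifs <;> simp
    _ = ‖x‖ := EuclideanSpace.norm_toLp_comp_perm x (interCellPartner_involutive N).toPerm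

theorem toEuclideanLin_sshMatrix (v w : ℝ) (x : EuclideanSpace ℝ (Fin (2 * N))) :
    toEuclideanLin (sshMatrix N v w) x = v • intraCellHop x + w • interCellHop x := by
  ext i
  simp [toLpLin_apply, sshMatrix_mulVec, intraCellHop, interCellHop]

theorem mul_norm_le_norm_toEuclideanLin_sshMatrix (v w : ℝ)
    (x : EuclideanSpace ℝ (Fin (2 * N))) :
    (|v| - |w|) * ‖x‖ ≤ ‖toEuclideanLin (sshMatrix N v w) x‖ := by
  rw [toEuclideanLin_sshMatrix]
  calc (|v| - |w|) * ‖x‖ ≤ ‖v • intraCellHop x‖ - ‖w • interCellHop x‖ := by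
        rw [norm_smul, norm_smul, norm_intraCellHop, Real.norm_eq_abs, Real.norm_eq_abs, sub_mul]
        gcongr
        exact norm_interCellHop_le x
    _ ≤ ‖v • intraCellHop x + w • interCellHop x‖ := norm_sub_le_norm_add _ _

end SSH

theorem ssh_gapped_trivial_phase_general (v w : ℝ) (hvw : |w| < |v|) :
    ∀ N : ℕ, IsUnit (sshMatrix N v w) ∧
      ∀ x : EuclideanSpace ℝ (Fin (2 * N)),
        (|v| - |w|) * ‖x‖ ≤ ‖Matrix.toEuclideanLin (sshMatrix N v w) x‖ := fun _ =>
  ⟨isUnit_of_mul_norm_le_norm_toEuclideanLin (sub_pos.2 hvw)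
    (mul_norm_le_norm_toEuclideanLin_sshMatrix v w),
    mul_norm_le_norm_toEuclideanLin_sshMatrix v w⟩

/-- in the trivial phase |v| > |w| > 0, the SSH matrix is invertible and its
smallest singular value is bounded below by |v| − |w|, uniformly in N. -/
theorem ssh_gapped_trivial_phase (v w : ℝ) (hw : 0 < |w|) (hvw : |w| < |v|) :
    ∀ N : ℕ, IsUnit (sshMatrix N v w) ∧
      ∀ x : EuclideanSpace ℝ (Fin (2 * N)),
        (|v| - |w|) * ‖x‖ ≤ ‖Matrix.toEuclideanLin (sshMatrix N v w) x‖ :=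
  ssh_gapped_trivial_phase_general v w hvw
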